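/- The number of plane trees on n edges with k leaves equals the Narayana number (1/n)*C(n,k)*C(n,k-1), for n >= k >= 1. -/

import Mathlib

inductive PlaneTree : Type
  | node : List PlaneTree → PlaneTree

namespace PlaneTree

def edges : PlaneTree → ℕ
  | node ts => (ts.attach.map (fun t => edges t.1)).sum + ts.length
decreasing_by have := List.sizeOf_lt_of_mem t.2; simp [PlaneTree.node.sizeOf_spec]; omega

def leafAux : PlaneTree → ℕ
  | node ts => (if ts.length = 0 then 1 else 0) + (ts.attach.map (fun t => leafAux t.1)).sum
decreasing_by have := List.sizeOf_lt_of_mem t.2; simp [PlaneTree.node.sizeOf_spec]; omega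

def internalAux : PlaneTree → ℕ
  | node ts => (if ts.length = 1 then 1 else 0) + (ts.attach.map (fun t => internalAux t.1)).sum
decreasing_by have := List.sizeOf_lt_of_mem t.2; simp [PlaneTree.node.sizeOf_spec]; omega

/-- number of leaves: non-root vertices of down degree 0 -/
def leaves : PlaneTree → ℕ
  | node ts => (ts.map leafAux).sum

/-- number of internal nodes: non-root vertices of down degree 1 -/
def internals : PlaneTree → ℕ
  | node ts => (ts.map internalAux).sum

def rootDegree : PlaneTree → ℕ
  | node ts => ts.length

end PlaneTree

/-!
Delete the edge from the first root of a forest of nonempty plane trees to its first child.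
Whether that child is a leaf, and whether it was the only child, gives four cases, so the number
`F(l, n, k)` of forests of `l` trees with `n` edges and `k` leaves satisfies
`F(l+1, n+1, k+1) = F(l, n, k) + F(l+1, n, k) + F(l+1, n, k+1) + F(l+2, n, k+1)`.
For `n ≥ 1` the `2 × 2` minor `C(n-1,k-1) C(n-1,k-l) - C(n-1,k-l-1) C(n-1,k)` of Pascal's
triangle obeys the same recursion (expanding every entry by Pascal's rule splits it into the four
minors) and has the same boundary values, so it equals `F(l, n, k)`. For `l = 1` the absorption
identity `i C(m,i) = (m-i+1) C(m,i-1)` turns `n` times the minor into `C(n,k) C(n,k-1)`.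
-/

namespace PlaneTree

@[simp] lemma edges_node (ts : List PlaneTree) :
    edges (node ts) = (ts.map edges).sum + ts.length := by
  rw [edges, List.attach_map_val]

@[simp] lemma leaves_node (ts : List PlaneTree) : leaves (node ts) = (ts.map leafAux).sum := rfl

@[simp] lemma leafAux_node (ts : List PlaneTree) :
    leafAux (node ts) = (if ts.length = 0 then 1 else 0) + (ts.map leafAux).sum := by
  rw [leafAux, List.attach_map_val]

lemma one_le_leafAux : ∀ t : PlaneTree, 1 ≤ leafAux t
  | node [] => by simp
  | node (t :: ts) => by
    have := one_le_leafAux t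
    simp only [leafAux_node, List.map_cons, List.sum_cons]
    omega

lemma one_le_edges_and_one_le_leaves :
    ∀ {t : PlaneTree}, t.rootDegree ≠ 0 → 1 ≤ t.edges ∧ 1 ≤ t.leaves
  | node [], h => absurd rfl h
  | node (t :: ts), _ => by
    have := one_le_leafAux t
    simp only [edges_node, leaves_node, List.map_cons, List.sum_cons, List.length_cons]
    omega

end PlaneTree

open PlaneTree

def IsForest (l n k : ℕ) (ts : List PlaneTree) : Prop :=
  (∀ t ∈ ts, t.rootDegree ≠ 0) ∧ ts.length = l ∧ (ts.map edges).sum = n ∧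
    (ts.map leaves).sum = k

namespace IsForest

variable {l n k : ℕ} {ts : List PlaneTree}

lemma le_edges_and_le_leaves (h : IsForest l n k ts) : l ≤ n ∧ l ≤ k := by
  obtain ⟨h, rfl, rfl, rfl⟩ := h
  induction ts with
  | nil => simp
  | cons t ts ih =>
    rw [List.forall_mem_cons] at h
    have := one_le_edges_and_one_le_leaves h.1
    have := ih h.2
    simp only [List.length_cons, List.map_cons, List.sum_cons]
    omega

@[simp] lemma nil_iff : IsForest l n k [] ↔ l = 0 ∧ n = 0 ∧ k = 0 := by
  simp [IsForest, eq_comm]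

lemma eq_nil (h : IsForest l n k ts) (h0 : l = 0 ∨ n = 0 ∨ k = 0) : ts = [] := by
  have := h.le_edges_and_le_leaves
  exact List.length_eq_zero_iff.mp (by have := h.2.1; omega)

lemma leaf_only {rest : List PlaneTree} :
    IsForest (l + 1) (n + 1) (k + 1) (node [node []] :: rest) ↔ IsForest l n k rest := by
  simp [IsForest, rootDegree]
  omega

lemma leaf_cons {t : PlaneTree} {ts rest : List PlaneTree} :
    IsForest (l + 1) (n + 1) (k + 1) (node (node [] :: t :: ts) :: rest) ↔
      IsForest (l + 1) n k (node (t :: ts) :: rest) := by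
  simp [IsForest, rootDegree]
  omega

lemma node_only {u : PlaneTree} {us rest : List PlaneTree} :
    IsForest (l + 1) (n + 1) (k + 1) (node [node (u :: us)] :: rest) ↔
      IsForest (l + 1) n (k + 1) (node (u :: us) :: rest) := by
  simp [IsForest, rootDegree]
  omega

lemma node_cons {u t : PlaneTree} {us ts rest : List PlaneTree} :
    IsForest (l + 1) (n + 1) (k + 1) (node (node (u :: us) :: t :: ts) :: rest) ↔
      IsForest (l + 2) n (k + 1) (node (u :: us) :: node (t :: ts) :: rest) := by
  simp [IsForest, rootDegree]
  omega

end IsForest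

def Forest (l n k : ℕ) : Type := {ts : List PlaneTree // IsForest l n k ts}

def forestSuccEquiv (l n k : ℕ) :
    Forest (l + 1) (n + 1) (k + 1) ≃
      Forest l n k ⊕ Forest (l + 1) n k ⊕ Forest (l + 1) n (k + 1) ⊕
        Forest (l + 2) n (k + 1) where
  toFun
    | ⟨node [node []] :: _, h⟩ => .inl ⟨_, IsForest.leaf_only.mp h⟩
    | ⟨node (node [] :: _ :: _) :: _, h⟩ => .inr (.inl ⟨_, IsForest.leaf_cons.mp h⟩)
    | ⟨node [node (_ :: _)] :: _, h⟩ => .inr (.inr (.inl ⟨_, IsForest.node_only.mp h⟩))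
    | ⟨node (node (_ :: _) :: _ :: _) :: _, h⟩ =>
      .inr (.inr (.inr ⟨_, IsForest.node_cons.mp h⟩))
    | ⟨[], h⟩ | ⟨node [] :: _, h⟩ => False.elim (by simp [IsForest, rootDegree] at h)
  invFun
    | .inl ⟨_, h⟩ => ⟨_, IsForest.leaf_only.mpr h⟩
    | .inr (.inl ⟨node (_ :: _) :: _, h⟩) => ⟨_, IsForest.leaf_cons.mpr h⟩
    | .inr (.inr (.inl ⟨node (_ :: _) :: _, h⟩)) => ⟨_, IsForest.node_only.mpr h⟩
    | .inr (.inr (.inr ⟨node (_ :: _) :: node (_ :: _) :: _, h⟩)) =>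
      ⟨_, IsForest.node_cons.mpr h⟩
    | .inr (.inl ⟨[], h⟩) | .inr (.inl ⟨node [] :: _, h⟩)
    | .inr (.inr (.inl ⟨[], h⟩)) | .inr (.inr (.inl ⟨node [] :: _, h⟩))
    | .inr (.inr (.inr ⟨[], h⟩)) | .inr (.inr (.inr ⟨[_], h⟩))
    | .inr (.inr (.inr ⟨node [] :: _ :: _, h⟩))
    | .inr (.inr (.inr ⟨_ :: node [] :: _, h⟩)) =>
      False.elim (by simp [IsForest, rootDegree] at h)
  left_inv := by
    rintro ⟨_ | ⟨⟨_ | ⟨⟨_ | ⟨u, us⟩⟩, _ | ⟨t, ts⟩⟩⟩, rest⟩, h⟩ <;>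
      first | rfl | simp [IsForest, rootDegree] at h
  right_inv := by
    rintro (⟨_, h⟩ | ⟨_ | ⟨⟨_ | _⟩, _⟩, h⟩ | ⟨_ | ⟨⟨_ | _⟩, _⟩, h⟩ |
        ⟨_ | ⟨⟨_ | _⟩, _ | ⟨⟨_ | _⟩, _⟩⟩, h⟩) <;>
      first | rfl | simp [IsForest, rootDegree] at h

namespace Forest

lemma subsingleton {l n k : ℕ} (h0 : l = 0 ∨ n = 0 ∨ k = 0) : Subsingleton (Forest l n k) :=
  ⟨fun a b => Subtype.ext ((a.2.eq_nil h0).trans (b.2.eq_nil h0).symm)⟩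

instance finite (l n k : ℕ) : Finite (Forest l n k) := by
  induction n generalizing l k with
  | zero => exact @Finite.of_subsingleton _ (subsingleton (by simp))
  | succ n ih =>
    match l, k with
    | 0, _ | _ + 1, 0 => exact @Finite.of_subsingleton _ (subsingleton (by simp))
    | l + 1, k + 1 => exact Finite.of_equiv _ (forestSuccEquiv l n k).symm

end Forest

noncomputable def forestCount (l n k : ℕ) : ℕ := Nat.card (Forest l n k)

lemma forestCount_succ (l n k : ℕ) :
    forestCount (l + 1) (n + 1) (k + 1) = forestCount l n k + forestCount (l + 1) n k +
      forestCount (l + 1) n (k + 1) + forestCount (l + 2) n (k + 1) := by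
  simp only [forestCount, Nat.card_congr (forestSuccEquiv l n k), Nat.card_sum, add_assoc]

lemma forestCount_of_eq_zero {l n k : ℕ} (h0 : l = 0 ∨ n = 0 ∨ k = 0) :
    forestCount l n k = if l = 0 ∧ n = 0 ∧ k = 0 then 1 else 0 := by
  have := Forest.subsingleton h0
  split_ifs with h
  · exact Nat.card_eq_one_iff_unique.mpr ⟨this, ⟨⟨[], IsForest.nil_iff.mpr h⟩⟩⟩
  · have : IsEmpty (Forest l n k) :=
      ⟨fun ⟨ts, hts⟩ => h (IsForest.nil_iff.mp (hts.eq_nil h0 ▸ hts))⟩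
    exact Nat.card_of_isEmpty

lemma card_trees_eq_forestCount {n : ℕ} (hn : n ≠ 0) (k : ℕ) :
    Nat.card {T : PlaneTree // T.edges = n ∧ T.leaves = k} = forestCount 1 n k := by
  refine Nat.card_congr <| Equiv.ofBijective
    (fun T => ⟨[T.1], ?_, rfl, by simp [T.2.1], by simp [T.2.2]⟩)
    ⟨fun T U h => Subtype.ext (List.singleton_inj.mp (congrArg Subtype.val h)), ?_⟩
  · obtain ⟨⟨_ | _⟩, hT, -⟩ := T
    · simp [← hT] at hn
    · simp [rootDegree]
  · rintro ⟨ts, h⟩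
    obtain ⟨T, rfl⟩ := List.length_eq_one_iff.mp h.2.1
    exact ⟨⟨T, by simpa using h.2.2⟩, rfl⟩

/-- The integer lower index lets Pascal's rule `chooseInt.succ_left` hold without side
conditions. -/
def chooseInt (n : ℕ) (i : ℤ) : ℤ := if 0 ≤ i then (n.choose i.toNat : ℤ) else 0

namespace chooseInt

lemma of_neg {n : ℕ} {i : ℤ} (h : i < 0) : chooseInt n i = 0 := if_neg (by omega)

@[simp] lemma natCast (n k : ℕ) : chooseInt n k = n.choose k := by simp [chooseInt]

lemma of_lt {n : ℕ} {i : ℤ} (h : n < i) : chooseInt n i = 0 := by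
  lift i to ℕ using by omega
  simp [Nat.choose_eq_zero_of_lt (by omega : n < i)]

lemma zero_left (i : ℤ) : chooseInt 0 i = if i = 0 then 1 else 0 := by
  unfold chooseInt
  split_ifs <;> simp_all [Nat.choose_eq_zero_iff]; omega

lemma succ_left (n : ℕ) (i : ℤ) :
    chooseInt (n + 1) i = chooseInt n (i - 1) + chooseInt n i := by
  rcases lt_or_ge i 1 with h | h
  · rcases lt_or_eq_of_le (show i ≤ 0 by omega) with h' | rfl
    · simp [of_neg h', of_neg (by omega : i - 1 < 0)]
    · simp [chooseInt]
  · obtain ⟨j, rfl⟩ : ∃ j : ℕ, i = (j + 1 : ℕ) := ⟨(i - 1).toNat, by omega⟩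
    rw [show ((j + 1 : ℕ) : ℤ) - 1 = (j : ℕ) by push_cast; ring]
    rw [natCast, natCast, natCast, Nat.choose_succ_succ', Nat.cast_add]

lemma mul_eq_mul_sub_one (n : ℕ) (i : ℤ) :
    i * chooseInt n i = (n - i + 1) * chooseInt n (i - 1) := by
  rcases lt_or_ge i 1 with h | h
  · rcases lt_or_eq_of_le (show i ≤ 0 by omega) with h' | rfl
    · simp [of_neg h', of_neg (by omega : i - 1 < 0)]
    · simp [of_neg (by omega : (-1 : ℤ) < 0)]
  · obtain ⟨j, rfl⟩ : ∃ j : ℕ, i = (j + 1 : ℕ) := ⟨(i - 1).toNat, by omega⟩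
    rw [show ((j + 1 : ℕ) : ℤ) - 1 = (j : ℕ) by push_cast; ring]
    rcases le_or_gt j n with hj | hj
    · have := congrArg (Nat.cast : ℕ → ℤ) (Nat.choose_succ_right_eq n j)
      push_cast [hj] at this
      simp only [natCast]
      push_cast
      linarith
    · rw [of_lt (by omega), of_lt (by omega : (n : ℤ) < (j : ℕ))]
      ring

end chooseInt

def pascalMinor (m : ℕ) (l k : ℤ) : ℤ :=
  chooseInt m (k - 1) * chooseInt m (k - l) - chooseInt m (k - l - 1) * chooseInt m k

namespace pascalMinor

open chooseInt

lemma zero_left (m : ℕ) (k : ℤ) : pascalMinor m 0 k = 0 := by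
  simp [pascalMinor, mul_comm]

lemma of_nonpos {m : ℕ} {l k : ℤ} (hl : 0 ≤ l) (hk : k ≤ 0) : pascalMinor m l k = 0 := by
  simp [pascalMinor, of_neg (by omega : k - 1 < 0), of_neg (by omega : k - l - 1 < 0)]

lemma zero_succ (l k : ℕ) :
    pascalMinor 0 (l + 1) (k + 1) = if l = 0 ∧ k = 0 then 1 else 0 := by
  simp only [pascalMinor, chooseInt.zero_left]
  split_ifs <;> omega

lemma succ (m : ℕ) (l k : ℤ) :
    pascalMinor (m + 1) (l + 1) (k + 1) = pascalMinor m l k + pascalMinor m (l + 1) k +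
      pascalMinor m (l + 1) (k + 1) + pascalMinor m (l + 2) (k + 1) := by
  simp only [pascalMinor, succ_left]
  ring_nf

lemma succ_mul_one_eq_choose_mul_choose (m : ℕ) (k : ℤ) :
    (m + 1) * pascalMinor m 1 k = chooseInt (m + 1) k * chooseInt (m + 1) (k - 1) := by
  rw [pascalMinor, succ_left, succ_left, show k - 1 - 1 = k - 2 by ring]
  rcases lt_or_ge k 1 with hk | hk
  · simp [of_neg (by omega : k - 1 < 0), of_neg (by omega : k - 2 < 0)]
  rcases lt_or_ge (m + 1 : ℤ) k with hk' | hk'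
  · simp [of_lt (by omega : (m : ℤ) < k - 1), of_lt (by omega : (m : ℤ) < k)]
  have h1 := mul_eq_mul_sub_one m k
  have h2 := mul_eq_mul_sub_one m (k - 1)
  rw [show k - 1 - 1 = k - 2 by ring] at h2
  apply mul_left_cancel₀ (mul_ne_zero (by omega : k ≠ 0) (by omega : (m : ℤ) - k + 2 ≠ 0))
  set a := chooseInt m (k - 1)
  set c := chooseInt m (k - 2)
  linear_combination (k * a + (m + 2) * (m - k + 1) * a) * h2
    - ((m - k + 2) * a + (m + 2) * (m - k + 2) * c) * h1

end pascalMinor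

lemma forestCount_succ_eq_pascalMinor :
    ∀ m l k : ℕ, (forestCount l (m + 1) k : ℤ) = pascalMinor m l k
  | m, 0, k => by
    rw [forestCount_of_eq_zero (by simp), if_neg (by simp)]
    exact (pascalMinor.zero_left m k).symm
  | m, l + 1, 0 => by
    rw [forestCount_of_eq_zero (by simp), if_neg (by simp)]
    exact (pascalMinor.of_nonpos (by omega) le_rfl).symm
  | 0, l + 1, k + 1 => by
    simp only [forestCount_succ, forestCount_of_eq_zero (Or.inr (Or.inl rfl))]
    push_cast
    rw [pascalMinor.zero_succ]
    split_ifs <;> simp_all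
  | m + 1, l + 1, k + 1 => by
    rw [forestCount_succ]
    push_cast
    simp only [forestCount_succ_eq_pascalMinor m]
    push_cast
    exact (pascalMinor.succ m l k).symm

theorem planeTree_count_leaves_narayana_general (n k : ℕ) (hk : 1 ≤ k) :
    n * Nat.card {T : PlaneTree // T.edges = n ∧ T.leaves = k} =
      Nat.choose n k * Nat.choose n (k - 1) := by
  rcases n with _ | m
  · simp [Nat.choose_eq_zero_of_lt hk]
  rw [card_trees_eq_forestCount m.succ_ne_zero]
  zify
  calc ((m + 1 : ℕ) : ℤ) * forestCount 1 (m + 1) k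
      = (m + 1) * pascalMinor m 1 k := by
        rw [forestCount_succ_eq_pascalMinor]; push_cast; rfl
    _ = chooseInt (m + 1) k * chooseInt (m + 1) (k - 1) :=
        pascalMinor.succ_mul_one_eq_choose_mul_choose m k
    _ = _ := by
        rw [show (k : ℤ) - 1 = (k - 1 : ℕ) by omega, chooseInt.natCast, chooseInt.natCast]

/-- The number of plane trees on `n` edges with `k` leaves is the Narayana number:
`n * T_n(k) = C(n,k) * C(n,k-1)` for `n ≥ k ≥ 1`. -/
theorem planeTree_count_leaves_narayana (n k : ℕ) (hk : 1 ≤ k) (hkn : k ≤ n) :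
    n * Nat.card {T : PlaneTree // T.edges = n ∧ T.leaves = k} =
      Nat.choose n k * Nat.choose n (k - 1) :=
  planeTree_count_leaves_narayana_general n k hk
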